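/- arXiv:1603.05116 — 4 statements merged into one kernel-verified Lean document; each statement's English description precedes it below -/
import Mathlib

section
/- Let G be a finite simple graph and let e be an edge of G. Then the Grundy domination number of the graph G - e obtained by deleting the edge e satisfies γ_gr(G - e) ≥ γ_gr(G) - 1. -/
/-- The closed neighborhood `N[v] = {v} ∪ N(v)` of a vertex. -/
def closedNbhd {V : Type*} (G : SimpleGraph V) (v : V) : Set V :=
  insert v (G.neighborSet v)

/-- A sequence (list) of pairwise distinct vertices is legal if each vertex
footprints some vertex not dominated by the previous ones. -/
def IsLegalSeq {V : Type*} (G : SimpleGraph V) (l : List V) : Prop :=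
  l.Nodup ∧ ∀ i : Fin l.length, ∃ u,
    u ∈ closedNbhd G (l.get i) ∧
    ∀ j : Fin l.length, (j : ℕ) < (i : ℕ) → u ∉ closedNbhd G (l.get j)

/-- A legal dominating sequence. -/
def IsDomSeq {V : Type*} (G : SimpleGraph V) (l : List V) : Prop :=
  IsLegalSeq G l ∧ ∀ u : V, ∃ v ∈ l, u ∈ closedNbhd G v

/-- The Grundy domination number: the maximum length of a legal dominating sequence. -/
noncomputable def grundyDomNum {V : Type*} (G : SimpleGraph V) : ℕ :=
  sSup {k : ℕ | ∃ l : List V, IsDomSeq G l ∧ l.length = k}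

/-!
Deleting `e = xy` shrinks only `N[x]` and `N[y]`, by one vertex each. Given a legal sequence
`S` of `G`, call a vertex of `S` bad if in `G - e` it footprints no vertex left undominated (in
`G`) by its predecessors. All footprints of a bad vertex were lost, so it is an endpoint of `e`,
its only footprint is the other endpoint, and it is itself dominated earlier. Two bad vertices
cannot occur: the later one would footprint the earlier one, which is already dominated. Removing
the bad vertex, if there is one, leaves a sequence that is legal in `G - e`.
-/

section GrundyDomination

variable {V : Type*} {G H : SimpleGraph V} {u v w : V} {l l' : List V}

lemma mem_closedNbhd : u ∈ closedNbhd G v ↔ u = v ∨ G.Adj v u := Iff.rfl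

lemma self_mem_closedNbhd (G : SimpleGraph V) (v : V) : v ∈ closedNbhd G v :=
  mem_closedNbhd.2 (Or.inl rfl)

lemma closedNbhd_mono (h : H ≤ G) : closedNbhd H v ⊆ closedNbhd G v :=
  fun _ hu => mem_closedNbhd.2 (mem_closedNbhd.1 hu |>.imp_right (@h _ _))

lemma eq_of_mem_closedNbhd_of_notMem_deleteEdges {e : Sym2 V} (hG : u ∈ closedNbhd G v)
    (hG' : u ∉ closedNbhd (G.deleteEdges {e}) v) : s(v, u) = e := by
  rw [mem_closedNbhd] at hG hG'
  rw [SimpleGraph.deleteEdges_adj] at hG'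
  push Not at hG'
  rcases hG with rfl | hadj
  · exact absurd rfl hG'.1
  · simpa using hG'.2 hadj

def dominatedBy (G : SimpleGraph V) (l : List V) : Set V :=
  {u | ∃ w ∈ l, u ∈ closedNbhd G w}

lemma dominatedBy_mono (hHG : H ≤ G) (hl : l ⊆ l') : dominatedBy H l ⊆ dominatedBy G l' :=
  fun _ ⟨w, hw, hu⟩ => ⟨w, hl hw, closedNbhd_mono hHG hu⟩

lemma isLegalSeq_iff_forall_eq_append_cons :
    IsLegalSeq G l ↔ ∀ l₁ v l₂, l = l₁ ++ v :: l₂ → ¬ closedNbhd G v ⊆ dominatedBy G l₁ := by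
  constructor
  · rintro ⟨-, hfoot⟩ l₁ v l₂ rfl
    obtain ⟨u, hu, hprev⟩ := hfoot ⟨l₁.length, by simp⟩
    refine Set.not_subset.2 ⟨u, by simpa using hu, ?_⟩
    rintro ⟨_, hw, huw⟩
    obtain ⟨j, hj, rfl⟩ := List.getElem_of_mem hw
    exact hprev ⟨j, by simp; omega⟩ hj (by simpa [List.getElem_append_left hj] using huw)
  · intro h
    have hprefix : ∀ i (hi : i < l.length), ¬ closedNbhd G l[i] ⊆ dominatedBy G (l.take i) :=
      fun i hi => h _ _ _ (by rw [← List.drop_eq_getElem_cons, List.take_append_drop])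
    have hmem_take : ∀ {i j} (hi : i < l.length) (hj : j < i), l[j] ∈ l.take i :=
      fun hi hj => List.mem_take_iff_getElem.2 ⟨_, by omega, rfl⟩
    refine ⟨List.pairwise_iff_getElem.2 fun i j _ hj hij heq => ?_, fun i => ?_⟩
    · exact hprefix j hj fun u hu => ⟨l[i], hmem_take hj hij, heq ▸ hu⟩
    · obtain ⟨u, hu, hnot⟩ := Set.not_subset.1 (hprefix i i.2)
      exact ⟨u, hu, fun j hj huj => hnot ⟨l[j], hmem_take i.2 hj, huj⟩⟩

lemma IsLegalSeq.not_closedNbhd_subset {l₁ l₂ : List V} (hl : IsLegalSeq G l)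
    (h : l = l₁ ++ v :: l₂) : ¬ closedNbhd G v ⊆ dominatedBy G l₁ :=
  isLegalSeq_iff_forall_eq_append_cons.1 hl _ _ _ h

lemma IsLegalSeq.append_singleton (hl : IsLegalSeq G l) (hu : u ∉ dominatedBy G l) :
    IsLegalSeq G (l ++ [u]) := by
  refine isLegalSeq_iff_forall_eq_append_cons.2 fun l₁ v l₂ h => ?_
  have hu' : ¬ closedNbhd G u ⊆ dominatedBy G l := fun hsub => hu (hsub (self_mem_closedNbhd G u))
  rcases List.append_eq_append_iff.1 h with ⟨a, rfl, ha⟩ | ⟨b, rfl, hb⟩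
  · obtain ⟨rfl, rfl⟩ : a = [] ∧ v = u := by cases a <;> simp_all
    simpa using hu'
  · rcases b with _ | ⟨b, bs⟩
    · obtain rfl : v = u := by simp_all
      simpa using hu'
    · obtain rfl : b = v := (List.cons_eq_cons.1 hb).1.symm
      exact hl.not_closedNbhd_subset rfl

lemma IsLegalSeq.length_le_grundyDomNum [Fintype V] (hl : IsLegalSeq G l) :
    l.length ≤ grundyDomNum G := by
  have hbdd : BddAbove {k | ∃ l : List V, IsLegalSeq G l ∧ l.length = k} :=
    ⟨Fintype.card V, by rintro _ ⟨l, hl, rfl⟩; exact hl.1.length_le_card⟩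
  obtain ⟨m, hm, hlen⟩ := Nat.sSup_mem (by exact ⟨_, l, hl, rfl⟩) hbdd
  have hdom : ∀ u, ∃ v ∈ m, u ∈ closedNbhd G v := by
    by_contra! ⟨u, hu⟩
    have := le_csSup hbdd ⟨_, hm.append_singleton (u := u) (by simpa [dominatedBy] using hu), rfl⟩
    simp only [List.length_append, List.length_singleton] at this
    omega
  calc l.length ≤ m.length := hlen ▸ le_csSup hbdd ⟨l, hl, rfl⟩
    _ ≤ grundyDomNum G :=
      le_csSup (s := {k | ∃ l, IsDomSeq G l ∧ l.length = k})
        (hbdd.mono <| by rintro _ ⟨l, hl, rfl⟩; exact ⟨l, hl.1, rfl⟩) ⟨m, ⟨hm, hdom⟩, rfl⟩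

lemma isLegalSeq_of_forall_exists_superset (hHG : H ≤ G)
    (h : ∀ l₁ v l₂, l = l₁ ++ v :: l₂ → ∃ s, l₁ ⊆ s ∧ ¬ closedNbhd H v ⊆ dominatedBy G s) :
    IsLegalSeq H l :=
  isLegalSeq_iff_forall_eq_append_cons.2 fun l₁ v l₂ hl hsub =>
    let ⟨_, hs, hnot⟩ := h l₁ v l₂ hl
    hnot (hsub.trans (dominatedBy_mono hHG hs))

lemma IsLegalSeq.not_closedNbhd_deleteEdges_subset {e : Sym2 V} {A B C : List V}
    (hS : IsLegalSeq G (A ++ v :: (B ++ w :: C)))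
    (hv : closedNbhd (G.deleteEdges {e}) v ⊆ dominatedBy G A) :
    ¬ closedNbhd (G.deleteEdges {e}) w ⊆ dominatedBy G (A ++ v :: B) := by
  intro hw
  obtain ⟨u₀, hu₀, hu₀A⟩ := Set.not_subset.1 (hS.not_closedNbhd_subset rfl)
  obtain ⟨u₁, hu₁, hu₁A⟩ :=
    Set.not_subset.1 (hS.not_closedNbhd_subset (l₁ := A ++ v :: B) (v := w) (l₂ := C) (by simp))
  have he₀ : s(v, u₀) = e := eq_of_mem_closedNbhd_of_notMem_deleteEdges hu₀ fun h => hu₀A (hv h)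
  have he₁ : s(w, u₁) = e := eq_of_mem_closedNbhd_of_notMem_deleteEdges hu₁ fun h => hu₁A (hw h)
  have hvw : v ≠ w := fun h =>
    (List.nodup_cons.1 (List.nodup_append.1 hS.1).2.1).1 (by simp [h])
  obtain rfl : u₁ = v := by
    rcases Sym2.eq_iff.1 (he₁.trans he₀.symm) with ⟨h, -⟩ | ⟨-, h⟩
    exacts [absurd h.symm hvw, h]
  exact hu₁A (dominatedBy_mono le_rfl (by simp) (hv (self_mem_closedNbhd _ u₁)))

lemma IsLegalSeq.exists_deleteEdges {S : List V} (hS : IsLegalSeq G S) (e : Sym2 V) :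
    ∃ T, IsLegalSeq (G.deleteEdges {e}) T ∧ S.length ≤ T.length + 1 := by
  have hle : G.deleteEdges {e} ≤ G := G.deleteEdges_le _
  by_cases hgood : ∀ A v B, S = A ++ v :: B →
      ¬ closedNbhd (G.deleteEdges {e}) v ⊆ dominatedBy G A
  · exact ⟨S, isLegalSeq_of_forall_exists_superset hle fun A v B h =>
      ⟨A, List.Subset.refl _, hgood A v B h⟩, by omega⟩
  push Not at hgood
  obtain ⟨A, v, B, rfl, hv⟩ := hgood
  refine ⟨A ++ B, isLegalSeq_of_forall_exists_superset hle fun l₁ w l₂ hT => ?_, by simp; omega⟩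
  -- `w` sits in `S` before or after `v`; in either case its split of `S` is good, as `v`'s is not.
  rcases List.append_eq_append_iff.1 hT with ⟨a, rfl, rfl⟩ | ⟨_ | ⟨w', c⟩, rfl, hc⟩
  · exact ⟨A ++ v :: a, by simp, hS.not_closedNbhd_deleteEdges_subset hv⟩
  · obtain rfl : B = w :: l₂ := by simpa using hc.symm
    simp only [List.append_nil] at hS hv
    exact ⟨l₁ ++ [v], by simp, hS.not_closedNbhd_deleteEdges_subset (B := []) hv⟩
  · obtain ⟨rfl, rfl⟩ := List.cons_eq_cons.1 hc
    refine ⟨l₁, List.Subset.refl _, fun hw => ?_⟩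
    have hS' : IsLegalSeq G (l₁ ++ w :: (c ++ v :: B)) := by simpa using hS
    exact hS'.not_closedNbhd_deleteEdges_subset hw hv

end GrundyDomination

theorem grundy_edge_deletion_lower_general {V : Type*} [Fintype V] (G : SimpleGraph V)
    (e : Sym2 V) :
    grundyDomNum G - 1 ≤ grundyDomNum (G.deleteEdges {e}) := by
  suffices grundyDomNum G ≤ grundyDomNum (G.deleteEdges {e}) + 1 by omega
  refine csSup_le' ?_
  rintro _ ⟨S, hS, rfl⟩
  obtain ⟨T, hT, hlen⟩ := hS.1.exists_deleteEdges e
  exact hlen.trans (Nat.add_le_add_right hT.length_le_grundyDomNum 1)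

theorem grundy_edge_deletion_lower {V : Type*} [Fintype V] (G : SimpleGraph V)
    (e : Sym2 V) (he : e ∈ G.edgeSet) :
    grundyDomNum G - 1 ≤ grundyDomNum (G.deleteEdges {e}) :=
  grundy_edge_deletion_lower_general G e
end

section
/- For integers m ≥ 4 and n ≥ 3, let G_{m,n} be the graph obtained by identifying a vertex of degree 1 of the path P_m with a vertex of the complete graph K_n. Then γ_gr(G_{m,n}) = m. -/
/-- The graph `G_{m,n}` obtained by identifying an endpoint of the path `P_m`
(on vertices `0, …, m-1`) with a vertex of the complete graph `K_n`
(on vertices `m-1, …, m+n-2`). -/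
def pathClique (m n : ℕ) : SimpleGraph (Fin (m + n - 1)) :=
  SimpleGraph.fromRel (fun a b =>
    a.val + 1 = b.val ∨ (m - 1 ≤ a.val ∧ m - 1 ≤ b.val))

lemma mem_closedNbhd_iff {m n : ℕ} {v u : Fin (m + n - 1)} :
    u ∈ closedNbhd (pathClique m n) v ↔
      (u.val = v.val ∨ u.val + 1 = v.val ∨ v.val + 1 = u.val ∨
        (m - 1 ≤ u.val ∧ m - 1 ≤ v.val)) := by
  simp only [closedNbhd, Set.mem_insert_iff, SimpleGraph.mem_neighborSet, pathClique,
    SimpleGraph.fromRel_adj, Fin.ext_iff, ne_eq]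
  omega

/-- The purely arithmetic core of the upper-bound argument: there is no legal
sequence of length `m + 1`.  Here `a i` is the value of the `i`-th vertex of the
sequence and `b i` the value of its footprint. -/
lemma key_arith (m : ℕ) (hm : 4 ≤ m) (a b : Fin (m + 1) → ℕ)
    (ha_inj : Function.Injective a)
    (hD : ∀ i, b i = a i ∨ b i + 1 = a i ∨ a i + 1 = b i ∨
      (m - 1 ≤ b i ∧ m - 1 ≤ a i))
    (hND : ∀ i j : Fin (m + 1), j < i →
      ¬(b i = a j ∨ b i + 1 = a j ∨ a j + 1 = b i ∨ (m - 1 ≤ b i ∧ m - 1 ≤ a j))) :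
    False := by
  classical
  have hLa : ∀ i, m ≤ b i → m - 1 ≤ a i := by intro i h; have := hD i; omega
  have L1 : ∀ i j : Fin (m + 1), i ≠ j → m ≤ b i → m ≤ b j → False := by
    intro i j hne hbi hbj
    rcases lt_or_gt_of_ne hne with h | h
    · exact hND j i h (Or.inr (Or.inr (Or.inr ⟨by omega, hLa i hbi⟩)))
    · exact hND i j h (Or.inr (Or.inr (Or.inr ⟨by omega, hLa j hbj⟩)))
  have hb_inj : Function.Injective b := by
    intro i j hij
    by_contra hne
    rcases lt_or_gt_of_ne hne with h | h
    · exact hND j i h (by have := hD i; omega)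
    · exact hND i j h (by have := hD j; omega)
  set S := Finset.univ.image b with hS
  have hScard : S.card = m + 1 := by
    rw [hS, Finset.card_image_of_injective _ hb_inj, Finset.card_univ, Fintype.card_fin]
  have hU : (S.filter (fun x => ¬ x < m)).card ≤ 1 := by
    apply Finset.card_le_one.2
    intro x hx y hy
    simp only [hS, Finset.mem_filter, Finset.mem_image, Finset.mem_univ, true_and] at hx hy
    obtain ⟨⟨i, rfl⟩, hxm⟩ := hx
    obtain ⟨⟨j, rfl⟩, hym⟩ := hy
    by_contra hne
    exact L1 i j (fun h => hne (by rw [h])) (by omega) (by omega)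
  have hsplit := Finset.card_filter_add_card_filter_not
    (s := S) (p := fun x => x < m)
  have hTsub : S.filter (fun x => x < m) ⊆ Finset.range m := by
    intro x hx
    simp only [Finset.mem_filter] at hx
    exact Finset.mem_range.2 hx.2
  have hT : S.filter (fun x => x < m) = Finset.range m := by
    apply Finset.eq_of_subset_of_card_le hTsub
    rw [Finset.card_range]
    omega
  have hsurj : ∀ p, p < m → ∃ i, b i = p := by
    intro p hp
    have : p ∈ S.filter (fun x => x < m) := by rw [hT]; exact Finset.mem_range.2 hp
    simp only [hS, Finset.mem_filter, Finset.mem_image, Finset.mem_univ, true_and] at this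
    exact this.1
  have hbig : ∃ i0, m ≤ b i0 := by
    by_contra hno
    push_neg at hno
    have hsub : S ⊆ Finset.range m := by
      intro x hx
      simp only [hS, Finset.mem_image, Finset.mem_univ, true_and] at hx
      obtain ⟨i, rfl⟩ := hx
      exact Finset.mem_range.2 (hno i)
    have := Finset.card_le_card hsub
    rw [hScard, Finset.card_range] at this
    omega
  obtain ⟨i0, hi0⟩ := hbig
  have ha0 : m - 1 ≤ a i0 := hLa i0 hi0
  obtain ⟨i1, hi1⟩ := hsurj (m - 1) (by omega)
  have hne01 : i0 ≠ i1 := by intro hh; rw [hh] at hi0; omega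
  have B1 : m - 1 ≤ a i1 → False := by
    intro hA
    rcases lt_or_gt_of_ne hne01 with ho | ho
    · exact hND i1 i0 ho (by omega)
    · exact hND i0 i1 ho (by omega)
  have ha1 : a i1 + 1 = m - 1 := by
    rcases hD i1 with h | h | h | h
    · exact absurd (by omega : m - 1 ≤ a i1) (fun hh => B1 hh)
    · exact absurd (by omega : m - 1 ≤ a i1) (fun hh => B1 hh)
    · omega
    · exact absurd h.2 (fun hh => B1 hh)
  clear hLa L1 hU hsplit hTsub hT hScard hS B1 hne01 ha0 hi0
  have claim : ∀ t, t ≤ m - 1 → ∃ j, b j + t + 1 = m ∧ a j + t + 2 = m := by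
    intro t
    induction t with
    | zero => intro _; exact ⟨i1, by omega, by omega⟩
    | succ t ih =>
      intro ht
      obtain ⟨j', hbj', haj'⟩ := ih (by omega)
      obtain ⟨p, hp⟩ : ∃ p, p + t + 2 = m := ⟨m - t - 2, by omega⟩
      obtain ⟨j, hbj⟩ := hsurj p (by omega)
      have hne : j ≠ j' := by intro hh; rw [hh] at hbj; omega
      have hgoal : a j + t + 3 = m := by
        clear ih hsurj hb_inj hi1 ha1
        rcases hD j with h | h | h | h
        · exact absurd (ha_inj (by omega : a j = a j')) hne
        · exfalso
          rcases lt_trichotomy j j' with ho | ho | ho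
          · exact hND j' j ho (by omega)
          · exact hne ho
          · exact hND j j' ho (by omega)
        · omega
        · omega
      exact ⟨j, by omega, by omega⟩
  obtain ⟨j, hbj, haj⟩ := claim (m - 1) (le_refl _)
  omega

/-- Upper bound: any legal sequence in `G_{m,n}` has length at most `m`. -/
lemma legal_len_le (m n : ℕ) (hm : 4 ≤ m) (hn : 3 ≤ n) (l : List (Fin (m + n - 1)))
    (hl : IsLegalSeq (pathClique m n) l) : l.length ≤ m := by
  classical
  by_contra hcon
  push_neg at hcon
  obtain ⟨hnd, hleg⟩ := hl
  have hk : m + 1 ≤ l.length := hcon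
  let e : Fin (m + 1) → Fin l.length := fun i => ⟨i.val, by omega⟩
  choose f hf1 hf2 using hleg
  refine key_arith m hm (fun i => (l.get (e i)).val) (fun i => (f (e i)).val) ?_ ?_ ?_
  · intro i j hij
    have h1 : l.get (e i) = l.get (e j) := Fin.ext hij
    have h2 : e i = e j := List.nodup_iff_injective_get.1 hnd h1
    have h3 := congrArg Fin.val h2
    exact Fin.ext h3
  · exact fun i => (mem_closedNbhd_iff).1 (hf1 (e i))
  · intro i j hji hmem
    exact hf2 (e i) (e j) hji ((mem_closedNbhd_iff).2 hmem)

/-- Lower bound: the sequence `0, 1, …, m-1` is a legal dominating sequence. -/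
lemma exists_domSeq (m n : ℕ) (hm : 4 ≤ m) (hn : 3 ≤ n) :
    ∃ l : List (Fin (m + n - 1)), IsDomSeq (pathClique m n) l ∧ l.length = m := by
  set g : Fin m → Fin (m + n - 1) :=
    fun i => ⟨i.val, by have := i.isLt; omega⟩ with hg
  refine ⟨List.ofFn g, ⟨⟨?_, ?_⟩, ?_⟩, by simp⟩
  · rw [List.nodup_ofFn]
    intro i j hij
    have : (g i).val = (g j).val := congrArg Fin.val hij
    exact Fin.ext this
  · intro i
    have hlen : (List.ofFn g).length = m := by simp
    have hival : i.val < m := by have := i.isLt; omega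
    have hget : ∀ j : Fin (List.ofFn g).length, ((List.ofFn g).get j).val = j.val := by
      intro j
      simp [List.get_ofFn, hg]
    refine ⟨⟨i.val + 1, by omega⟩, ?_, ?_⟩
    · rw [mem_closedNbhd_iff, hget i]
      simp
    · intro j hji
      rw [mem_closedNbhd_iff, hget j]
      have : j.val < i.val := hji
      simp only [Fin.val_mk, not_or]
      omega
  · intro u
    by_cases hu : u.val < m
    · refine ⟨u, ?_, ?_⟩
      · rw [List.mem_ofFn]
        exact ⟨⟨u.val, hu⟩, Fin.ext rfl⟩
      · rw [mem_closedNbhd_iff]; omega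
    · refine ⟨⟨m - 1, by omega⟩, ?_, ?_⟩
      · rw [List.mem_ofFn]
        exact ⟨⟨m - 1, by omega⟩, Fin.ext rfl⟩
      · rw [mem_closedNbhd_iff]
        simp only [Fin.val_mk]
        omega

theorem grundy_pathClique (m n : ℕ) (hm : 4 ≤ m) (hn : 3 ≤ n) :
    grundyDomNum (pathClique m n) = m := by
  obtain ⟨l, hl, hlen⟩ := exists_domSeq m n hm hn
  have hmem : m ∈ {k : ℕ | ∃ l : List (Fin (m + n - 1)),
      IsDomSeq (pathClique m n) l ∧ l.length = k} := ⟨l, hl, hlen⟩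
  have hub : ∀ k ∈ {k : ℕ | ∃ l : List (Fin (m + n - 1)),
      IsDomSeq (pathClique m n) l ∧ l.length = k}, k ≤ m := by
    rintro k ⟨l', hl', rfl⟩
    exact legal_len_le m n hm hn l' hl'.1
  exact le_antisymm (csSup_le ⟨m, hmem⟩ hub) (le_csSup ⟨m, hub⟩ hmem)
end

section
/- For integers n ≥ 1 and p ≥ 1, consider the set L of vertices v = (v_1,…,v_n) of the Sierpiński graph S_p^n such that either v_n = 0, or there exist l with 2 ≤ l ≤ n and a < b in {0,…,p-1} such that v_{n-l+1} = a and v_{n-l+2} = ⋯ = v_n = b. Then the number of vertices in L is p^{n-1} + p(p^{n-1} - 1)/2. -/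
/-- The Sierpiński graph `S_p^n` on vertex set `{0,…,p-1}^n`: two distinct vertices
`u` and `v` are adjacent iff there is a coordinate `h` with `u t = v t` for `t < h`,
`u h ≠ v h`, and `u t = v h`, `v t = u h` for all `t > h`. -/
def sierpinskiGraph (p n : ℕ) : SimpleGraph (Fin n → Fin p) :=
  SimpleGraph.fromRel (fun u v => ∃ h : Fin n,
    (∀ t : Fin n, t < h → u t = v t) ∧ u h ≠ v h ∧
    (∀ t : Fin n, h < t → u t = v h ∧ v t = u h))

/-- The set `L` of vertices `v` of `S_p^n` such that the last bit of `v` is `0`, or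
`v = ⟨x_1 … x_{n-l} a b^{l-1}⟩` for some `2 ≤ l ≤ n` and `a < b`. -/
def sierpLexSet (p n : ℕ) (hn : 1 ≤ n) : Set (Fin n → Fin p) :=
  {v | (v ⟨n - 1, by omega⟩).val = 0 ∨
    ∃ l, ∃ _ : 2 ≤ l, ∃ _ : l ≤ n, ∃ a b : Fin p, a < b ∧
      v ⟨n - l, by omega⟩ = a ∧
      ∀ i : Fin n, n - l + 1 ≤ i.val → v i = b}

/-! A vertex `v = w b` with last letter `b` lies in `L` iff `b = 0` or, reading `w` from the
right, the first letter different from `b` is smaller than `b`. Peeling off the last letter of `w`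
shows that `b (1 + p + ⋯ + p^(m-1))` words `w` of length `m` have the second property; summing over
`b` gives `p (p - 1) / 2 · (p^m - 1) / (p - 1)`. -/

open Finset

def RisesTo {p m : ℕ} (b : Fin p) (w : Fin m → Fin p) : Prop :=
  ∃ k, w k < b ∧ ∀ j, k < j → w j = b

instance {p m : ℕ} (b : Fin p) (w : Fin m → Fin p) : Decidable (RisesTo b w) := by
  unfold RisesTo; infer_instance

section RisesTo

variable {p m : ℕ}

lemma RisesTo.pos {b : Fin p} {w : Fin m → Fin p} (h : RisesTo b w) : 0 < (b : ℕ) := by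
  obtain ⟨k, hk, -⟩ := h
  exact Nat.zero_lt_of_lt hk

lemma risesTo_snoc {b x : Fin p} {w : Fin m → Fin p} :
    RisesTo b (Fin.snoc w x : Fin (m + 1) → Fin p) ↔ x < b ∨ x = b ∧ RisesTo b w := by
  simp only [RisesTo, Fin.exists_fin_succ', Fin.forall_fin_succ', Fin.snoc_castSucc, Fin.snoc_last,
    Fin.castSucc_lt_castSucc_iff, Fin.castSucc_lt_last, not_lt_of_ge (Fin.le_last _)]
  grind

lemma card_risesTo (b : Fin p) (m : ℕ) :
    #{w : Fin m → Fin p | RisesTo b w} = b * ∑ j ∈ range m, p ^ j := by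
  induction m with
  | zero => simp [RisesTo]
  | succ m ih =>
    have hsplit : #{w : Fin (m + 1) → Fin p | RisesTo b w} =
        #(Iio b ×ˢ (univ : Finset (Fin m → Fin p)) ∪
          ({b} : Finset (Fin p)) ×ˢ ({w | RisesTo b w} : Finset (Fin m → Fin p))) := by
      refine card_equiv (Fin.snocEquiv fun _ => Fin p).symm fun v => ?_
      rw [mem_filter_univ, ← Fin.snoc_init_self v, risesTo_snoc]
      simp [eq_comm, and_comm]
    rw [hsplit, card_union_of_disjoint (disjoint_product.2 (.inl (by simp))), card_product,
      card_product, ih]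
    simp only [Fin.card_Iio, card_univ, Fintype.card_pi, Fintype.card_fin, prod_const,
      card_singleton, one_mul, sum_range_succ]
    ring

end RisesTo

lemma card_risesTo_pairs_mul_two (p m : ℕ) :
    #{bw : Fin p × (Fin m → Fin p) | RisesTo bw.1 bw.2} * 2 = p * (p ^ m - 1) := by
  have hfibers : #{bw : Fin p × (Fin m → Fin p) | RisesTo bw.1 bw.2} =
      ∑ b : Fin p, #{w : Fin m → Fin p | RisesTo b w} := by
    simp only [card_filter, Fintype.sum_prod_type]
  rcases p with _ | q
  · simp
  rw [hfibers]
  simp only [card_risesTo, ← sum_mul, Fin.sum_univ_eq_sum_range (fun i => i)]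
  rw [← geom_sum_mul_add q m, Nat.add_sub_cancel]
  calc (∑ i ∈ range (q + 1), i) * (∑ j ∈ range m, (q + 1) ^ j) * 2
      = (∑ i ∈ range (q + 1), i) * 2 * (∑ j ∈ range m, (q + 1) ^ j) := by ring
    _ = (q + 1) * ((∑ j ∈ range m, (q + 1) ^ j) * q) := by rw [sum_range_id_mul_two, Nat.add_sub_cancel]; ring

lemma mem_sierpLexSet_iff {p m : ℕ} (hn : 1 ≤ m + 1) (v : Fin (m + 1) → Fin p) :
    v ∈ sierpLexSet p (m + 1) hn ↔
      (v (Fin.last m)).val = 0 ∨ RisesTo (v (Fin.last m)) (Fin.init v) := by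
  refine or_congr Iff.rfl ⟨?_, ?_⟩
  · rintro ⟨l, hl2, hlm, a, b, hab, hva, htail⟩
    have hb : v (Fin.last m) = b := htail _ (by simp; omega)
    refine ⟨⟨m + 1 - l, by omega⟩, ?_, fun j hj => ?_⟩
    · rw [hb]; convert hab using 1; exact hva
    · rw [hb]; exact htail _ (by simp only [Fin.lt_def, Fin.val_castSucc] at hj ⊢; omega)
  · rintro ⟨k, hk, hrun⟩
    refine ⟨m + 1 - k, by omega, by omega, _, _, hk, ?_, fun i hi => ?_⟩
    · congr 1; ext; simp; omega
    · rcases Fin.eq_castSucc_or_eq_last i with ⟨j, rfl⟩ | rfl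
      · exact hrun j (by simp only [Fin.lt_def, Fin.val_castSucc] at hi ⊢; omega)
      · rfl

lemma card_zero_or_risesTo (p m : ℕ) [NeZero p] :
    #{bw : Fin p × (Fin m → Fin p) | bw.1 = 0 ∨ RisesTo bw.1 bw.2} =
      p ^ m + #{bw : Fin p × (Fin m → Fin p) | RisesTo bw.1 bw.2} := by
  rw [filter_or, card_union_of_disjoint]
  · congr 1
    trans #(({0} : Finset (Fin p)) ×ˢ (univ : Finset (Fin m → Fin p)))
    · congr 1; ext ⟨b, w⟩; simp [eq_comm]
    · simp
  · exact disjoint_filter.2 fun bw _ h0 hrise => hrise.pos.ne' (by simp [h0])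

lemma ncard_sierpLexSet_succ (p m : ℕ) [NeZero p] (hn : 1 ≤ m + 1) :
    (sierpLexSet p (m + 1) hn).ncard =
      #{bw : Fin p × (Fin m → Fin p) | bw.1 = 0 ∨ RisesTo bw.1 bw.2} := by
  classical
  rw [Set.ncard_eq_toFinset_card']
  refine card_equiv (Fin.snocEquiv fun _ => Fin p).symm fun v => ?_
  simp [mem_sierpLexSet_iff, Fin.val_eq_zero_iff]

theorem card_sierpLexSet (p n : ℕ) (hp : 1 ≤ p) (hn : 1 ≤ n) :
    (sierpLexSet p n hn).ncard = p ^ (n - 1) + p * (p ^ (n - 1) - 1) / 2 := by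
  obtain ⟨m, rfl⟩ : ∃ m, n = m + 1 := ⟨n - 1, by omega⟩
  have : NeZero p := ⟨by omega⟩
  have hrises := card_risesTo_pairs_mul_two p m
  rw [ncard_sierpLexSet_succ, card_zero_or_risesTo, Nat.add_sub_cancel]
  omega
end

section
/- Let G be a finite simple graph on vertices v_1, …, v_n which admits an interval representation assigning to each v_i a closed real interval [a_i, b_i] such that v_i and v_j (i ≠ j) are adjacent if and only if [a_i, b_i] ∩ [a_j, b_j] ≠ ∅, and suppose all 2n endpoints a_1, b_1, …, a_n, b_n are pairwise distinct. Let e_1 < e_2 < ⋯ < e_{2n} be the endpoints listed in increasing order. Then γ_gr(G) equals the number of indices k ∈ {1, …, 2n-1} such that e_k is a left endpoint (e_k = a_i for some i) and e_{k+1} is a right endpoint (e_{k+1} = b_j for some j). -/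
/-!
The points `e k` at which a left endpoint is immediately followed by a right endpoint are the
tips of the maximal cliques of the interval graph: every intersecting pair of intervals shares
such a point (walk right from the larger left endpoint until the first left-to-right switch).
Hence footprinting assigns distinct tips to the vertices of a legal sequence, which bounds its
length. Conversely, choosing for each tip the interval starting there, in decreasing order of
tips, gives a legal dominating sequence: the interval ending right after a tip is a footprint
that no interval starting further to the right can see.
-/

open Set

lemma Nat.exists_mem_Ico_and_not_succ {P : ℕ → Prop} {p q : ℕ} (hpq : p ≤ q) (hp : P p)
    (hq : ¬P q) : ∃ k ∈ Ico p q, P k ∧ ¬P (k + 1) := by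
  induction q, hpq using Nat.le_induction with
  | base => exact absurd hp hq
  | succ q hpq ih =>
    by_cases hPq : P q
    · exact ⟨q, ⟨hpq, q.lt_succ_self⟩, hPq, hq⟩
    · obtain ⟨k, ⟨hpk, hkq⟩, hk⟩ := ih hPq
      exact ⟨k, ⟨hpk, hkq.trans q.lt_succ_self⟩, hk⟩

section Grundy

variable {V : Type*} {G : SimpleGraph V}

lemma IsLegalSeq.length_le_card_of_cover {ι : Type*} [Fintype ι] {l : List V}
    (hl : IsLegalSeq G l) (C : ι → Set V)
    (hclique : ∀ k, ∀ u ∈ C k, ∀ v ∈ C k, u ∈ closedNbhd G v)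
    (hcover : ∀ u v, u ∈ closedNbhd G v → ∃ k, u ∈ C k ∧ v ∈ C k) :
    l.length ≤ Fintype.card ι := by
  choose u hu hnew using hl.2
  choose k hku hkl using fun i => hcover (u i) (l.get i) (hu i)
  have hk : Function.Injective k := by
    intro i j hij
    by_contra hne
    rcases lt_or_gt_of_ne hne with h | h
    · exact hnew j i h (hclique _ _ (hij ▸ hku j) _ (hkl i))
    · exact hnew i j h (hclique _ _ (hij ▸ hku i) _ (hij ▸ hkl j))
  simpa using Fintype.card_le_of_injective k hk

lemma isDomSeq_ofFn {m : ℕ} (w u : Fin m → V) (hu : ∀ i, u i ∈ closedNbhd G (w i))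
    (hnew : ∀ i j, j < i → u i ∉ closedNbhd G (w j))
    (hdom : ∀ x, ∃ i, x ∈ closedNbhd G (w i)) :
    IsDomSeq G (List.ofFn w) := by
  refine ⟨⟨List.nodup_ofFn.2 fun i j hij => ?_, fun i => ?_⟩, fun x => ?_⟩
  · by_contra hne
    rcases lt_or_gt_of_ne hne with h | h
    · exact hnew j i h (hij ▸ hu j)
    · exact hnew i j h (hij ▸ hu i)
  · refine ⟨u (i.cast (by simp)), List.get_ofFn w i ▸ hu _, fun j hji => ?_⟩
    rw [List.get_ofFn]
    exact hnew _ _ hji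
  · obtain ⟨i, hi⟩ := hdom x
    exact ⟨w i, List.mem_ofFn.2 ⟨i, rfl⟩, hi⟩

lemma exists_isDomSeq_of_footprints {ι : Type*} [Fintype ι] [LinearOrder ι] (w u : ι → V)
    (hu : ∀ k, u k ∈ closedNbhd G (w k))
    (hnew : ∀ k k', k < k' → u k ∉ closedNbhd G (w k'))
    (hdom : ∀ x, ∃ k, x ∈ closedNbhd G (w k)) :
    ∃ l, IsDomSeq G l ∧ l.length = Fintype.card ι := by
  let σ : Fin (Fintype.card ι) → ι := fun i => monoEquivOfFin ι rfl i.rev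
  refine ⟨List.ofFn (w ∘ σ), isDomSeq_ofFn _ (u ∘ σ) (fun i => hu _) (fun i j hji => ?_)
    (fun x => ?_), List.length_ofFn⟩
  · exact hnew _ _ ((monoEquivOfFin ι rfl).lt_iff_lt.2 (Fin.rev_lt_rev.2 hji))
  · obtain ⟨k, hk⟩ := hdom x
    refine ⟨((monoEquivOfFin ι rfl).symm k).rev, ?_⟩
    simpa [σ] using hk

lemma grundyDomNum_eq_of_forall_le {n : ℕ} (hle : ∀ l, IsLegalSeq G l → l.length ≤ n)
    (hex : ∃ l, IsDomSeq G l ∧ l.length = n) : grundyDomNum G = n :=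
  IsGreatest.csSup_eq ⟨hex, fun _ ⟨l, hl, hlen⟩ => hlen ▸ hle l hl.1⟩

end Grundy

section IntervalGraph

variable {V : Type*} {N : ℕ} {a b : V → ℝ} {e : Fin N → ℝ}

def IsLeftRightIndex (a b : V → ℝ) (e : Fin N → ℝ) (k : Fin N) : Prop :=
  ∃ hk : (k : ℕ) + 1 < N, e k ∈ range a ∧ e ⟨k + 1, hk⟩ ∈ range b

lemma exists_isLeftRightIndex_mem_Icc (hmono : StrictMono e)
    (hrange : range e = range a ∪ range b) (hdisj : Disjoint (range a) (range b))
    {s t : ℝ} (hs : s ∈ range a) (ht : t ∈ range b) (hst : s ≤ t) :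
    ∃ k, IsLeftRightIndex a b e k ∧ e k ∈ Icc s t := by
  obtain ⟨p, rfl⟩ : s ∈ range e := hrange ▸ Or.inl hs
  obtain ⟨q, rfl⟩ : t ∈ range e := hrange ▸ Or.inr ht
  obtain ⟨k, ⟨hpk, hkq⟩, ⟨hkN, hk⟩, hk1a⟩ :=
    Nat.exists_mem_Ico_and_not_succ (P := fun j => ∃ h : j < N, e ⟨j, h⟩ ∈ range a)
      (hmono.le_iff_le.1 hst) ⟨p.2, hs⟩ fun ⟨_, hq⟩ => disjoint_left.1 hdisj hq ht
  have hk1N : k + 1 < N := by omega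
  have hk1 : e ⟨k + 1, hk1N⟩ ∈ range a ∪ range b := hrange ▸ mem_range_self _
  exact ⟨⟨k, hkN⟩, ⟨hk1N, hk, hk1.resolve_left fun h => hk1a ⟨hk1N, h⟩⟩,
    hmono.monotone (show p ≤ ⟨k, hkN⟩ from hpk), hmono.monotone (show ⟨k, hkN⟩ ≤ q from hkq.le)⟩

variable {G : SimpleGraph V}

lemma mem_closedNbhd_iff_of_intervals (hab : ∀ v, a v ≤ b v)
    (hrep : ∀ u v : V, u ≠ v →
      (G.Adj u v ↔ (Icc (a u) (b u) ∩ Icc (a v) (b v)).Nonempty)) {u v : V} :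
    u ∈ closedNbhd G v ↔ (Icc (a u) (b u) ∩ Icc (a v) (b v)).Nonempty := by
  rcases eq_or_ne u v with rfl | huv
  · simp [closedNbhd, hab u]
  · simp [closedNbhd, huv, G.adj_comm, hrep u v huv]

variable (hab : ∀ v, a v ≤ b v)
    (hrep : ∀ u v : V, u ≠ v →
      (G.Adj u v ↔ (Icc (a u) (b u) ∩ Icc (a v) (b v)).Nonempty))
    (hdisj : Disjoint (range a) (range b)) (hmono : StrictMono e)
    (hrange : range e = range a ∪ range b)
include hab hrep hdisj hmono hrange

lemma IsLegalSeq.length_le_card_isLeftRightIndex {l : List V} (hl : IsLegalSeq G l) :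
    l.length ≤ Nat.card {k // IsLeftRightIndex a b e k} := by
  classical
  rw [Nat.card_eq_fintype_card]
  refine hl.length_le_card_of_cover (fun k => {v | e k ∈ Icc (a v) (b v)})
    (fun k u hu v hv => (mem_closedNbhd_iff_of_intervals hab hrep).2 ⟨e k, hu, hv⟩)
    (fun u v huv => ?_)
  obtain ⟨s, hs, hs'⟩ : ∃ s ∈ range a, s = max (a u) (a v) := by
    rcases max_choice (a u) (a v) with h | h <;> exact ⟨_, mem_range_self _, h.symm⟩
  obtain ⟨t, ht, ht'⟩ : ∃ t ∈ range b, t = min (b u) (b v) := by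
    rcases min_choice (b u) (b v) with h | h <;> exact ⟨_, mem_range_self _, h.symm⟩
  have hst : s ≤ t := by
    rw [hs', ht', ← nonempty_Icc, ← Icc_inter_Icc]
    exact (mem_closedNbhd_iff_of_intervals hab hrep).1 huv
  obtain ⟨k, hk, hkst⟩ := exists_isLeftRightIndex_mem_Icc hmono hrange hdisj hs ht hst
  rw [hs', ht', ← Icc_inter_Icc] at hkst
  exact ⟨⟨k, hk⟩, hkst⟩

lemma exists_isDomSeq_length_eq_card_isLeftRightIndex :
    ∃ l, IsDomSeq G l ∧ l.length = Nat.card {k // IsLeftRightIndex a b e k} := by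
  classical
  rw [Nat.card_eq_fintype_card]
  choose hk1 hw hu using fun k : {k // IsLeftRightIndex a b e k} => k.2
  choose w hw using hw
  choose u hu using hu
  have hmem : ∀ {u v : V}, u ∈ closedNbhd G v ↔ (Icc (a u) (b u) ∩ Icc (a v) (b v)).Nonempty :=
    mem_closedNbhd_iff_of_intervals hab hrep
  refine exists_isDomSeq_of_footprints w u (fun k => ?_) (fun k k' hkk' => ?_) (fun x => ?_)
  · -- no endpoint lies strictly between `e k` and `e (k + 1)`, so `u k` starts by `e k`
    obtain ⟨r, hr⟩ : a (u k) ∈ range e := hrange ▸ Or.inl (mem_range_self _)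
    have hru : e r < e ⟨k.1 + 1, hk1 k⟩ :=
      hr ▸ hu k ▸ (hab _).lt_of_ne (hdisj.ne_of_mem (mem_range_self _) (mem_range_self _))
    have hrk : r ≤ k.1 := Fin.le_def.2 (Nat.lt_succ_iff.1 (hmono.lt_iff_lt.1 hru))
    refine hmem.2 ⟨e k, ⟨hr ▸ hmono.monotone hrk, ?_⟩, (hw k).le, (hw k).ge.trans (hab _)⟩
    exact hu k ▸ hmono.monotone (show k.1 ≤ ⟨k.1 + 1, hk1 k⟩ from Fin.le_def.2 (by simp))
  · intro hdom
    obtain ⟨t, ⟨-, htu⟩, ⟨htw, -⟩⟩ := hmem.1 hdom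
    have hne : (⟨k.1 + 1, hk1 k⟩ : Fin N) ≠ k'.1 := fun h =>
      hdisj.ne_of_mem (mem_range_self (w k')) (mem_range_self (u k)) (by rw [hw, hu, h])
    have hlt : e ⟨k.1 + 1, hk1 k⟩ < e k' := hmono (lt_of_le_of_ne (Fin.le_def.2 hkk') hne)
    linarith [hu k, hw k']
  · obtain ⟨k, hk, hkx⟩ :=
      exists_isLeftRightIndex_mem_Icc hmono hrange hdisj (mem_range_self x) (mem_range_self x)
        (hab x)
    exact ⟨⟨k, hk⟩, hmem.2 ⟨e k, hkx, (hw ⟨k, hk⟩).le, (hw ⟨k, hk⟩).ge.trans (hab _)⟩⟩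

end IntervalGraph

theorem grundy_interval_graph (V : Type*) [Fintype V] (G : SimpleGraph V)
    (a b : V → ℝ) (hab : ∀ v, a v ≤ b v)
    (hrep : ∀ u v : V, u ≠ v →
      (G.Adj u v ↔ (Set.Icc (a u) (b u) ∩ Set.Icc (a v) (b v)).Nonempty))
    (hdistinct : Function.Injective (Sum.elim a b : V ⊕ V → ℝ))
    (e : Fin (2 * Fintype.card V) → ℝ)
    (hmono : StrictMono e)
    (hrange : Set.range e = Set.range a ∪ Set.range b) :
    grundyDomNum G =
      Nat.card {k : Fin (2 * Fintype.card V) //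
        ∃ hk : (k : ℕ) + 1 < 2 * Fintype.card V,
          (∃ i : V, a i = e k) ∧ (∃ j : V, b j = e ⟨(k : ℕ) + 1, hk⟩)} := by
  have hdisj : Disjoint (range a) (range b) :=
    disjoint_range_iff.2 fun i j h => Sum.inl_ne_inr (hdistinct h)
  change grundyDomNum G = Nat.card {k // IsLeftRightIndex a b e k}
  exact grundyDomNum_eq_of_forall_le
    (fun _ hl => hl.length_le_card_isLeftRightIndex hab hrep hdisj hmono hrange)
    (exists_isDomSeq_length_eq_card_isLeftRightIndex hab hrep hdisj hmono hrange)
end
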